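/- Let Y be a two-state Markov chain on {0,1} with transition probabilities a (0→1), b (1→0), with λ ≤ a+b ≤ 1. Let S = (1/k) Σ_{ℓ=k+1}^{2k} Y(ℓ). Then |E[S] − a/(a+b)| ≤ (1/k) · (1−λ)^{k+1} / λ. -/

import Mathlib

open MeasureTheory Finset

/-! The probability `p ℓ` of being in state `1` at time `ℓ` obeys the affine recursion
`p (ℓ + 1) = a + (1 - a - b) p ℓ`, whose fixed point is `π = a / (a + b)`. Hence
`p ℓ - π = (1 - a - b) ^ ℓ (p 0 - π)`, so `|p ℓ - π| ≤ (1 - λ) ^ ℓ`, and averaging over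
`ℓ ∈ [k + 1, 2k]` leaves `1 / k` times a geometric tail bounded by `(1 - λ) ^ (k + 1) / λ`. -/

lemma setOf_eq_false_eq_compl {Ω : Type*} (f : Ω → Bool) :
    {ω | f ω = false} = {ω | f ω = true}ᶜ := by
  ext ω
  simp

/-- One step of a two-state chain: `A` is the event of being in state `1` now, `B` the
event of being in state `1` one step later. -/
lemma measureReal_eq_of_transition {Ω : Type*} [MeasurableSpace Ω] {μ : Measure Ω}
    [IsProbabilityMeasure μ] {A B : Set Ω} (hA : MeasurableSet A) (hB : MeasurableSet B)
    {a b : ℝ} (h01 : μ.real (B ∩ Aᶜ) = a * μ.real Aᶜ) (h10 : μ.real (Bᶜ ∩ A) = b * μ.real A) :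
    μ.real B = a + (1 - a - b) * μ.real A := by
  have hB_split := measureReal_inter_add_sdiff (μ := μ) (s := B) hA
  have hA_split := measureReal_inter_add_sdiff (μ := μ) (s := A) hB
  rw [Set.sdiff_eq] at hB_split
  rw [Set.sdiff_eq, Set.inter_comm A, Set.inter_comm A] at hA_split
  rw [probReal_compl_eq_one_sub hA] at h01
  linarith

lemma sub_eq_pow_mul_sub_of_affine_rec {R : Type*} [CommRing R] {p : ℕ → R} {c r x : R}
    (hrec : ∀ n, p (n + 1) = c + r * p n) (hx : c + r * x = x) (n : ℕ) :
    p n - x = r ^ n * (p 0 - x) := by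
  induction n with
  | zero => simp
  | succ n ih => rw [hrec, pow_succ', mul_assoc, ← ih]; linear_combination hx

lemma abs_sub_div_add_le_pow_of_affine_rec {p : ℕ → ℝ} {a b : ℝ} (ha : 0 ≤ a) (hb : 0 ≤ b)
    (hab_pos : 0 < a + b) (hab : a + b ≤ 1) (hp0 : 0 ≤ p 0) (hp1 : p 0 ≤ 1)
    (hrec : ∀ n, p (n + 1) = a + (1 - a - b) * p n) (n : ℕ) :
    |p n - a / (a + b)| ≤ (1 - (a + b)) ^ n := by
  have hfix : a + (1 - a - b) * (a / (a + b)) = a / (a + b) := by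
    field_simp; ring
  have hπ0 : 0 ≤ a / (a + b) := by positivity
  have hπ1 : a / (a + b) ≤ 1 := by rw [div_le_one hab_pos]; linarith
  have hinit : |p 0 - a / (a + b)| ≤ 1 := abs_le.2 ⟨by linarith, by linarith⟩
  rw [sub_eq_pow_mul_sub_of_affine_rec hrec hfix, abs_mul, abs_pow,
    abs_of_nonneg (by linarith : (0 : ℝ) ≤ 1 - a - b), sub_sub]
  exact mul_le_of_le_one_right (by positivity) hinit

lemma abs_average_sub_le {ι : Type*} {s : Finset ι} (hs : s.Nonempty) (f : ι → ℝ) (c : ℝ) :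
    |1 / (#s : ℝ) * ∑ i ∈ s, f i - c| ≤ 1 / (#s : ℝ) * ∑ i ∈ s, |f i - c| := by
  have hcard : (#s : ℝ) ≠ 0 := by exact_mod_cast hs.card_pos.ne'
  have hmean : 1 / (#s : ℝ) * ∑ i ∈ s, f i - c = 1 / (#s : ℝ) * ∑ i ∈ s, (f i - c) := by
    rw [sum_sub_distrib, sum_const, nsmul_eq_mul]
    field_simp
  rw [hmean, abs_mul, abs_of_nonneg (by positivity)]
  gcongr
  exact abs_sum_le_sum_abs _ _

/-- For a two-state Markov chain Y on {0,1} with transition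
probabilities a (0→1), b (1→0), with λ ≤ a+b ≤ 1 and λ > 0, and arbitrary initial
distribution, the empirical average S = (1/k) Σ_{ℓ=k+1}^{2k} Y(ℓ) satisfies
|E[S] − a/(a+b)| ≤ (1/k)·(1−λ)^{k+1}/λ. -/
theorem stmt_7 {Ω : Type*} [MeasurableSpace Ω] (μ : Measure Ω) [IsProbabilityMeasure μ]
    (a b lam : ℝ) (ha : 0 ≤ a) (hb : 0 ≤ b) (hab1 : a + b ≤ 1)
    (hlam : 0 < lam) (hab : lam ≤ a + b)
    (k : ℕ) (hk : 0 < k)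
    (Y : ℕ → Ω → Bool) (hYmeas : ∀ ℓ, Measurable (Y ℓ))
    (h01 : ∀ ℓ, (μ ({ω | Y (ℓ + 1) ω = true} ∩ {ω | Y ℓ ω = false})).toReal
      = a * (μ {ω | Y ℓ ω = false}).toReal)
    (h10 : ∀ ℓ, (μ ({ω | Y (ℓ + 1) ω = false} ∩ {ω | Y ℓ ω = true})).toReal
      = b * (μ {ω | Y ℓ ω = true}).toReal) :
    |(1 / (k : ℝ)) * (∑ ℓ ∈ Finset.Icc (k + 1) (2 * k), (μ {ω | Y ℓ ω = true}).toReal)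
        - a / (a + b)|
      ≤ (1 / (k : ℝ)) * (1 - lam) ^ (k + 1) / lam := by
  set p : ℕ → ℝ := fun ℓ => μ.real {ω | Y ℓ ω = true}
  have hmeas ℓ : MeasurableSet {ω | Y ℓ ω = true} := hYmeas ℓ (measurableSet_singleton true)
  have hrec ℓ : p (ℓ + 1) = a + (1 - a - b) * p ℓ := by
    simp only [setOf_eq_false_eq_compl] at h01 h10
    exact measureReal_eq_of_transition (hmeas ℓ) (hmeas (ℓ + 1)) (h01 ℓ) (h10 ℓ)
  have hdev ℓ : |p ℓ - a / (a + b)| ≤ (1 - lam) ^ ℓ :=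
    (abs_sub_div_add_le_pow_of_affine_rec ha hb (hlam.trans_le hab) hab1 measureReal_nonneg
      measureReal_le_one hrec ℓ).trans (by gcongr)
  have hcard : #(Icc (k + 1) (2 * k)) = k := by rw [Nat.card_Icc]; omega
  have hne : (Icc (k + 1) (2 * k)).Nonempty := nonempty_Icc.2 (by omega)
  calc _ ≤ 1 / (k : ℝ) * ∑ ℓ ∈ Icc (k + 1) (2 * k), |p ℓ - a / (a + b)| := by
        have h := abs_average_sub_le hne p (a / (a + b))
        rwa [hcard] at h
    _ ≤ 1 / (k : ℝ) * ∑ ℓ ∈ Ico (k + 1) (2 * k + 1), (1 - lam) ^ ℓ := by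
        rw [Ico_add_one_right_eq_Icc]
        gcongr with ℓ
        exact hdev ℓ
    _ ≤ 1 / (k : ℝ) * ((1 - lam) ^ (k + 1) / (1 - (1 - lam))) := by
        gcongr
        exact geom_sum_Ico_le_of_lt_one (by linarith) (by linarith)
    _ = _ := by rw [sub_sub_cancel, mul_div_assoc]
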